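/- For every nonnegative integer n, the operator T_1 = Σ_{i=1}^N z_i ∂_i² + 2a Σ_{i=1}^N (z_i − z_{i+1})^{-1}(z_i ∂_i − z_{i+1} ∂_{i+1}) − a Σ_{i=1}^N (z_i + z_{i+1})(z_i − z_{i+1})^{-2}(1 − K_{i,i+1}) leaves invariant the space 𝒮_1^n consisting of those polynomials in z_1,…,z_N of total degree at most n that can be written as a polynomial in σ_1, σ_2, τ_N which is of degree at most 1 in σ_2 and of degree at most 1 in τ_N; that is, for f ∈ 𝒮_1^n the rational function T_1 f is again a polynomial lying in 𝒮_1^n. -/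

import Mathlib

noncomputable section

open MvPolynomial

/-- Polynomials in `N` variables over `ℂ`. -/
abbrev MvP (N : ℕ) : Type := MvPolynomial (Fin N) ℂ

/-- The canonical embedding of polynomials into the field of rational functions. -/
noncomputable def phi (N : ℕ) : MvP N →+* FractionRing (MvP N) :=
  algebraMap (MvP N) (FractionRing (MvP N))

/-- The power sum `σ_k = ∑ i, z_i ^ k`. -/
def sig (N k : ℕ) : MvP N := ∑ i : Fin N, X i ^ k

/-- The top elementary symmetric polynomial `τ_N = ∏ i, z_i`. -/
def tauTop (N : ℕ) : MvP N := ∏ i : Fin N, X i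

/-- The operator
`T_1 = ∑ i z_i ∂_i² + 2a ∑ i (z_i - z_{i+1})⁻¹ (z_i ∂_i - z_{i+1} ∂_{i+1})
  - a ∑ i (z_i + z_{i+1}) (z_i - z_{i+1})⁻² (1 - K_{i,i+1})`
(indices cyclic, `K_{i,i+1}` exchanging the variables `z_i` and `z_{i+1}`),
computed in the field of rational functions. -/
noncomputable def T1op (N : ℕ) [NeZero N] (a : ℝ) (f : MvP N) : FractionRing (MvP N) :=
  (∑ i : Fin N, phi N (X i * pderiv i (pderiv i f)))
  + phi N (C ((2 * a : ℝ) : ℂ)) *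
      ∑ i : Fin N, (phi N (X i - X (i + 1)))⁻¹ *
        phi N (X i * pderiv i f - X (i + 1) * pderiv (i + 1) f)
  - phi N (C ((a : ℝ) : ℂ)) *
      ∑ i : Fin N, phi N (X i + X (i + 1)) * ((phi N (X i - X (i + 1)))⁻¹) ^ 2 *
        phi N (f - rename (Equiv.swap i (i + 1)) f)

/-- Membership in the space `𝒮_1^n`: polynomials of total degree at most `n` expressible as
a polynomial in `σ_1, σ_2, τ_N` of degree at most `1` in `σ_2` and at most `1` in `τ_N`. -/
def S1mem (N n : ℕ) (f : MvP N) : Prop :=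
  f.totalDegree ≤ n ∧
    ∃ F : MvPolynomial (Fin 3) ℂ, F.degreeOf 1 ≤ 1 ∧ F.degreeOf 2 ≤ 1 ∧
      f = aeval ![sig N 1, sig N 2, tauTop N] F


variable {σ : Type*}

lemma coeff_pderiv' (i : σ) (p : MvPolynomial σ ℂ) (m : σ →₀ ℕ) :
    coeff m (pderiv i p) = ((m i : ℂ) + 1) * coeff (m + Finsupp.single i 1) p := by
  classical
  induction p using MvPolynomial.induction_on' with
  | add p q hp hq => simp [hp, hq]; ring
  | monomial s a =>
    rw [pderiv_monomial, coeff_monomial, coeff_monomial]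
    by_cases h : s = m + Finsupp.single i 1
    · subst h
      rw [if_pos, if_pos rfl]
      · push_cast; simp [Finsupp.add_apply, Finsupp.single_eq_same]; ring
      · ext j
        by_cases hj : j = i <;> simp [hj, Finsupp.add_apply, Finsupp.single_eq_same,
          Finsupp.single_eq_of_ne, Finsupp.tsub_apply]
    · rw [if_neg h, mul_zero]
      by_cases h2 : s - Finsupp.single i 1 = m
      · rw [if_pos h2]
        by_cases hs : s i = 0
        · simp [hs]
        · exfalso
          apply h
          rw [← h2, tsub_add_cancel_of_le]
          rwa [Finsupp.single_le_iff, Nat.one_le_iff_ne_zero]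
      · rw [if_neg h2]

lemma mem_support_pderiv {i : σ} {p : MvPolynomial σ ℂ} {m : σ →₀ ℕ}
    (h : m ∈ (pderiv i p).support) : m + Finsupp.single i 1 ∈ p.support := by
  rw [mem_support_iff] at h ⊢
  intro hc
  rw [coeff_pderiv', hc, mul_zero] at h
  exact h rfl

lemma totalDegree_pderiv_lt {i : σ} {p : MvPolynomial σ ℂ} (h : pderiv i p ≠ 0) :
    (pderiv i p).totalDegree < p.totalDegree := by
  classical
  obtain ⟨m, hm, hsup⟩ := Finset.exists_mem_eq_sup (pderiv i p).support
    (MvPolynomial.support_nonempty.mpr h) (fun s => s.sum fun _ e => e)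
  have h2 := le_totalDegree (mem_support_pderiv hm)
  have h3 : ((m + Finsupp.single i 1).sum fun _ e => e) = (m.sum fun _ e => e) + 1 := by
    rw [Finsupp.sum_add_index' (fun _ => rfl) (fun _ _ _ => rfl)]
    simp [Finsupp.sum_single_index]
  rw [totalDegree, hsup]
  omega

lemma degreeOf_pderiv_le (j k : σ) (p : MvPolynomial σ ℂ) :
    degreeOf j (pderiv k p) ≤ degreeOf j p := by
  classical
  rw [degreeOf_le_iff]
  intro m hm
  have h1 := mem_support_pderiv hm
  calc m j ≤ ((m + Finsupp.single k 1 : σ →₀ ℕ)) j := by simp [Finsupp.add_apply]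
    _ ≤ degreeOf j p := degreeOf_le_iff.mp le_rfl _ h1

lemma degreeOf_pderiv_self {j : σ} {p : MvPolynomial σ ℂ} (h : degreeOf j p ≤ 1) :
    degreeOf j (pderiv j p) = 0 := by
  classical
  rw [Nat.eq_zero_of_le_zero (degreeOf_le_iff.mpr ?_)]
  intro m hm
  have h1 := mem_support_pderiv hm
  have h2 := degreeOf_le_iff.mp h _ h1
  simp [Finsupp.add_apply] at h2
  omega

lemma pderiv_pderiv_eq_zero {j : σ} {p : MvPolynomial σ ℂ} (h : degreeOf j p ≤ 1) :
    pderiv j (pderiv j p) = 0 := by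
  classical
  have h0 := degreeOf_pderiv_self h
  rw [MvPolynomial.eq_zero_iff]
  intro d
  rw [coeff_pderiv']
  have : coeff (d + Finsupp.single j 1) (pderiv j p) = 0 := by
    by_contra hc
    have h1 := degreeOf_le_iff.mp h0.le _ (mem_support_iff.mpr hc)
    simp [Finsupp.add_apply] at h1
  rw [this, mul_zero]

lemma totalDegree_X_sub_mul {N : ℕ} {i j : Fin N} (hij : i ≠ j) {q : MvPolynomial (Fin N) ℂ}
    (hq : q ≠ 0) : q.totalDegree + 1 ≤ ((X i - X j) * q).totalDegree := by
  classical
  set d : MvPolynomial (Fin N) ℂ := X i - X j with hd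
  have hdne : d ≠ 0 := sub_ne_zero.mpr (fun h => hij (X_injective h))
  have hd1 : d.IsHomogeneous 1 := (isHomogeneous_X _ _).sub (isHomogeneous_X _ _)
  set k := q.totalDegree with hk
  -- the top homogeneous component of q is nonzero
  obtain ⟨m, hm, hsup⟩ := Finset.exists_mem_eq_sup q.support
    (MvPolynomial.support_nonempty.mpr hq) (fun s => s.sum fun _ e => e)
  have hdeg : m.degree = k := by
    rw [hk, totalDegree, hsup]; rfl
  have hcomp : homogeneousComponent k q ≠ 0 := by
    intro hzero
    have := coeff_homogeneousComponent (n := k) (φ := q) m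
    rw [hzero, if_pos hdeg] at this
    simp only [coeff_zero] at this
    exact (mem_support_iff.mp hm) this.symm
  -- homogeneous component of the product
  have hmul : homogeneousComponent (k + 1) (d * q) = d * homogeneousComponent k q := by
    conv_lhs => rw [← sum_homogeneousComponent q, Finset.mul_sum, map_sum]
    rw [Finset.sum_eq_single k]
    · have hmem : d * homogeneousComponent k q ∈ homogeneousSubmodule (Fin N) ℂ (k + 1) := by
        rw [mem_homogeneousSubmodule, add_comm]
        exact hd1.mul (homogeneousComponent_isHomogeneous k q)
      rw [homogeneousComponent_of_mem hmem, if_pos rfl]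
    · intro b _ hb
      have hmem : d * homogeneousComponent b q ∈ homogeneousSubmodule (Fin N) ℂ (1 + b) := by
        rw [mem_homogeneousSubmodule]
        exact hd1.mul (homogeneousComponent_isHomogeneous b q)
      rw [homogeneousComponent_of_mem hmem, if_neg (by omega)]
    · intro hk2
      simp at hk2
      omega
  by_contra hlt
  push_neg at hlt
  have := homogeneousComponent_eq_zero (φ := d * q) (n := k + 1) hlt
  rw [hmul] at this
  exact mul_ne_zero hdne hcomp this


lemma chain_rule {N : ℕ} (v : Fin 3 → MvP N) (H : MvPolynomial (Fin 3) ℂ) (i : Fin N) :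
    pderiv i (aeval v H) = ∑ j : Fin 3, aeval v (pderiv j H) * pderiv i (v j) := by
  classical
  induction H using MvPolynomial.induction_on with
  | C c => simp [MvPolynomial.algebraMap_eq, pderiv_C]
  | add p q hp hq =>
    rw [map_add, map_add, hp, hq, ← Finset.sum_add_distrib]
    exact Finset.sum_congr rfl fun j _ => by rw [map_add, map_add, add_mul]
  | mul_X p s hp =>
    have hps : ∀ j : Fin 3, pderiv j (p * X s) = pderiv j p * X s + if j = s then p else 0 := by
      intro j
      rw [pderiv_mul, pderiv_X]
      by_cases h : j = s
      · subst h; simp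
      · simp [h, Pi.single_eq_of_ne (Ne.symm h)]
    simp only [map_mul, aeval_X, pderiv_mul, hp, hps, map_add, apply_ite (aeval v), map_zero,
      add_mul, ite_mul, zero_mul, Finset.sum_add_distrib, Finset.sum_ite_eq', Finset.mem_univ,
      if_true, Finset.sum_mul]
    refine congrArg (· + _) ?_
    apply Finset.sum_congr rfl
    intro j _
    ring

lemma pderiv_X_prod_erase {N : ℕ} (i : Fin N) (s : Finset (Fin N)) (his : i ∉ s) :
    pderiv i (∏ j ∈ s, (X j : MvP N)) = 0 := by
  classical
  apply pderiv_eq_zero_of_notMem_vars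
  intro hmem
  have h2 := vars_prod (f := fun j : Fin N => (X j : MvP N)) (s := s) hmem
  rw [Finset.mem_biUnion] at h2
  obtain ⟨j, hj, hij⟩ := h2
  rw [vars_X, Finset.mem_singleton] at hij
  exact his (hij ▸ hj)

lemma rename_sig' {N : ℕ} (e : Fin N ≃ Fin N) (k : ℕ) :
    rename (e : Fin N → Fin N) (∑ i : Fin N, (X i : MvP N) ^ k) = ∑ i : Fin N, X i ^ k := by
  rw [map_sum]
  simp only [map_pow, rename_X]
  exact Fintype.sum_equiv e _ _ (fun i => rfl)

lemma rename_tau' {N : ℕ} (e : Fin N ≃ Fin N) :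
    rename (e : Fin N → Fin N) (∏ i : Fin N, (X i : MvP N)) = ∏ i : Fin N, X i := by
  rw [map_prod]
  simp only [rename_X]
  exact Fintype.prod_equiv e _ _ (fun i => rfl)
/-- The substitution vector. -/
def vS (N : ℕ) : Fin 3 → MvP N := ![sig N 1, sig N 2, tauTop N]

lemma vS0 (N : ℕ) : vS N 0 = sig N 1 := rfl
lemma vS1 (N : ℕ) : vS N 1 = sig N 2 := rfl
lemma vS2 (N : ℕ) : vS N 2 = tauTop N := rfl

lemma pderiv_tau (N : ℕ) (i : Fin N) :
    pderiv i (tauTop N) = ∏ j ∈ Finset.univ.erase i, (X j : MvP N) := by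
  classical
  rw [tauTop, ← Finset.mul_prod_erase _ _ (Finset.mem_univ i), pderiv_mul, pderiv_X_self,
    one_mul, pderiv_X_prod_erase i _ (Finset.notMem_erase i _), mul_zero, add_zero]

lemma X_mul_pderiv_tau (N : ℕ) (i : Fin N) :
    X i * pderiv i (tauTop N) = tauTop N := by
  classical
  rw [pderiv_tau, tauTop, Finset.mul_prod_erase _ _ (Finset.mem_univ i)]

lemma pderiv_pderiv_tau (N : ℕ) (i : Fin N) :
    pderiv i (pderiv i (tauTop N)) = 0 := by
  classical
  rw [pderiv_tau]
  exact pderiv_X_prod_erase i _ (Finset.notMem_erase i _)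

lemma pderiv_sig1 (N : ℕ) (i : Fin N) : pderiv i (sig N 1) = 1 := by
  classical
  simp [sig, pderiv_X]

lemma pderiv_sig2 (N : ℕ) (i : Fin N) : pderiv i (sig N 2) = C 2 * X i := by
  classical
  simp only [sig, map_sum, pderiv_pow, pderiv_X]
  simp only [Pi.single_apply, mul_ite, mul_one, mul_zero, Finset.sum_ite_eq', Finset.mem_univ,
    if_true, pow_one]
  rw [map_ofNat]
  norm_num

lemma chain3 {N : ℕ} (H : MvPolynomial (Fin 3) ℂ) (i : Fin N) :
    pderiv i (aeval (vS N) H) =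
      aeval (vS N) (pderiv 0 H) + aeval (vS N) (pderiv 1 H) * (C 2 * X i)
        + aeval (vS N) (pderiv 2 H) * pderiv i (tauTop N) := by
  rw [chain_rule, Fin.sum_univ_three, vS0, vS1, vS2, pderiv_sig1, pderiv_sig2, mul_one]

/-- The polynomial giving the second-derivative part of `T1` on `𝒮_1`. -/
def GA (N : ℕ) (F : MvPolynomial (Fin 3) ℂ) : MvPolynomial (Fin 3) ℂ :=
  X 0 * pderiv 0 (pderiv 0 F)
    + C 2 * X 1 * (pderiv 1 (pderiv 0 F) + pderiv 0 (pderiv 1 F))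
    + C (N : ℂ) * X 2 * (pderiv 2 (pderiv 0 F) + pderiv 0 (pderiv 2 F))
    + C 2 * (X 0 * X 2) * (pderiv 2 (pderiv 1 F) + pderiv 1 (pderiv 2 F))
    + C 2 * X 0 * pderiv 1 F

/-- The polynomial giving the first-derivative part of `T1` on `𝒮_1`. -/
def GQ (N : ℕ) (F : MvPolynomial (Fin 3) ℂ) : MvPolynomial (Fin 3) ℂ :=
  C (N : ℂ) * pderiv 0 F + C 4 * X 0 * pderiv 1 F

section Main

variable {N : ℕ} {F : MvPolynomial (Fin 3) ℂ}

lemma hddf (hF1 : F.degreeOf 1 ≤ 1) (hF2 : F.degreeOf 2 ≤ 1) (i : Fin N) :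
    pderiv i (pderiv i (aeval (vS N) F)) =
      (aeval (vS N) (pderiv 0 (pderiv 0 F))
          + aeval (vS N) (pderiv 1 (pderiv 0 F)) * (C 2 * X i)
          + aeval (vS N) (pderiv 2 (pderiv 0 F)) * pderiv i (tauTop N))
        + ((aeval (vS N) (pderiv 0 (pderiv 1 F))
          + aeval (vS N) (pderiv 2 (pderiv 1 F)) * pderiv i (tauTop N)) * (C 2 * X i)
          + aeval (vS N) (pderiv 1 F) * C 2)
        + (aeval (vS N) (pderiv 0 (pderiv 2 F))
          + aeval (vS N) (pderiv 1 (pderiv 2 F)) * (C 2 * X i)) * pderiv i (tauTop N) := by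
  have hB11 : aeval (vS N) (pderiv 1 (pderiv 1 F)) = (0 : MvP N) := by
    rw [pderiv_pderiv_eq_zero hF1, map_zero]
  have hB22 : aeval (vS N) (pderiv 2 (pderiv 2 F)) = (0 : MvP N) := by
    rw [pderiv_pderiv_eq_zero hF2, map_zero]
  rw [chain3 F i]
  simp only [map_add, pderiv_mul, pderiv_C, zero_mul, pderiv_X_self, mul_one,
    pderiv_pderiv_tau, mul_zero, add_zero, zero_add]
  rw [chain3 (pderiv 0 F) i, chain3 (pderiv 1 F) i, chain3 (pderiv 2 F) i, hB11, hB22]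
  ring

lemma hXterm (hF1 : F.degreeOf 1 ≤ 1) (hF2 : F.degreeOf 2 ≤ 1) (i : Fin N) :
    X i * pderiv i (pderiv i (aeval (vS N) F)) =
      aeval (vS N) (pderiv 0 (pderiv 0 F)) * X i
      + C 2 * (aeval (vS N) (pderiv 1 (pderiv 0 F)) + aeval (vS N) (pderiv 0 (pderiv 1 F)))
          * (X i * X i)
      + (aeval (vS N) (pderiv 2 (pderiv 0 F)) + aeval (vS N) (pderiv 0 (pderiv 2 F))) * tauTop N
      + C 2 * (aeval (vS N) (pderiv 2 (pderiv 1 F)) + aeval (vS N) (pderiv 1 (pderiv 2 F)))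
          * (tauTop N * X i)
      + C 2 * aeval (vS N) (pderiv 1 F) * X i := by
  rw [hddf hF1 hF2 i]
  linear_combination (aeval (vS N) (pderiv 2 (pderiv 0 F)) + aeval (vS N) (pderiv 0 (pderiv 2 F))
    + C 2 * (aeval (vS N) (pderiv 2 (pderiv 1 F)) + aeval (vS N) (pderiv 1 (pderiv 2 F))) * X i)
      * X_mul_pderiv_tau N i

lemma sum_X (N : ℕ) : ∑ i : Fin N, (X i : MvP N) = sig N 1 := by
  simp [sig]

lemma sum_XX (N : ℕ) : ∑ i : Fin N, (X i : MvP N) * X i = sig N 2 := by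
  rw [sig]
  exact Finset.sum_congr rfl fun i _ => (pow_two _).symm

lemma main_Af (hF1 : F.degreeOf 1 ≤ 1) (hF2 : F.degreeOf 2 ≤ 1) :
    ∑ i : Fin N, X i * pderiv i (pderiv i (aeval (vS N) F)) = aeval (vS N) (GA N F) := by
  rw [Finset.sum_congr rfl fun i _ => hXterm hF1 hF2 i]
  simp only [Finset.sum_add_distrib, ← Finset.mul_sum, Finset.sum_const, Finset.card_univ,
    Fintype.card_fin, nsmul_eq_mul]
  rw [sum_X, sum_XX, GA]
  simp only [map_add, map_mul, aeval_X, vS0, vS1, vS2, aeval_C, MvPolynomial.algebraMap_eq,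
    nsmul_eq_mul]
  rw [show ((N : ℕ) : MvP N) = C ((N : ℕ) : ℂ) from by norm_cast]
  ring

lemma main_num [NeZero N] (i : Fin N) :
    X i * pderiv i (aeval (vS N) F) - X (i + 1) * pderiv (i + 1) (aeval (vS N) F) =
      (X i - X (i + 1)) * (aeval (vS N) (pderiv 0 F)
        + C 2 * (X i + X (i + 1)) * aeval (vS N) (pderiv 1 F)) := by
  rw [chain3 F i, chain3 F (i + 1)]
  linear_combination aeval (vS N) (pderiv 2 F) * X_mul_pderiv_tau N i
    - aeval (vS N) (pderiv 2 F) * X_mul_pderiv_tau N (i + 1)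

lemma sum_X_succ (N : ℕ) [NeZero N] : ∑ i : Fin N, (X (i + 1) : MvP N) = sig N 1 := by
  rw [← sum_X N]
  exact Fintype.sum_equiv (Equiv.addRight 1) _ _ fun i => rfl

lemma main_Q [NeZero N] :
    ∑ i : Fin N, (aeval (vS N) (pderiv 0 F)
        + C 2 * (X i + X (i + 1)) * aeval (vS N) (pderiv 1 F)) = aeval (vS N) (GQ N F) := by
  simp only [Finset.sum_add_distrib, Finset.sum_const, Finset.card_univ, Fintype.card_fin,
    nsmul_eq_mul, add_mul, mul_assoc, ← Finset.sum_mul, ← Finset.mul_sum]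
  rw [sum_X, sum_X_succ, GQ]
  simp only [map_add, map_mul, aeval_X, vS0, aeval_C, MvPolynomial.algebraMap_eq, map_ofNat]
  rw [show ((N : ℕ) : MvP N) = C ((N : ℕ) : ℂ) from by norm_cast]
  ring

lemma sym_f (e : Equiv.Perm (Fin N)) :
    rename (⇑e) (aeval (vS N) F) = aeval (vS N) F := by
  rw [comp_aeval_apply (f := vS N) (rename (⇑e) : MvP N →ₐ[ℂ] MvP N) F]
  have hv : (fun i => rename (⇑e) (vS N i)) = vS N := by
    funext j
    fin_cases j
    · show rename (⇑e) (vS N 0) = vS N 0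
      rw [vS0, sig, rename_sig', ← sig]
    · show rename (⇑e) (vS N 1) = vS N 1
      rw [vS1, sig, rename_sig', ← sig]
    · show rename (⇑e) (vS N 2) = vS N 2
      rw [vS2, tauTop, rename_tau', ← tauTop]
  rw [hv]

end Main

section Deg

variable {N : ℕ} {F : MvPolynomial (Fin 3) ℂ}

lemma degOf_mul_bound {p q : MvPolynomial (Fin 3) ℂ} {j : Fin 3} {u v : ℕ}
    (hp : degreeOf j p ≤ u) (hq : degreeOf j q ≤ v) : degreeOf j (p * q) ≤ u + v :=
  (degreeOf_mul_le _ _ _).trans (add_le_add hp hq)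

lemma degOf_add_bound {p q : MvPolynomial (Fin 3) ℂ} {j : Fin 3} {u : ℕ}
    (hp : degreeOf j p ≤ u) (hq : degreeOf j q ≤ u) : degreeOf j (p + q) ≤ u :=
  (degreeOf_add_le _ _ _).trans (max_le hp hq)

lemma deg_G_1 (hF1 : F.degreeOf 1 ≤ 1) (c : ℂ) :
    degreeOf 1 (GA N F + C c * GQ N F) ≤ 1 := by
  have hC : ∀ (z : ℂ), degreeOf 1 (C z : MvPolynomial (Fin 3) ℂ) ≤ 0 := fun z => by
    simp [degreeOf_C]
  have hX0 : degreeOf 1 (X 0 : MvPolynomial (Fin 3) ℂ) ≤ 0 := by simp [degreeOf_X]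
  have hX1 : degreeOf 1 (X 1 : MvPolynomial (Fin 3) ℂ) ≤ 1 := by simp [degreeOf_X]
  have hX2 : degreeOf 1 (X 2 : MvPolynomial (Fin 3) ℂ) ≤ 0 := by simp [degreeOf_X]
  have h2 : (2 : MvPolynomial (Fin 3) ℂ) = C 2 := (map_ofNat C 2).symm
  have h4 : (4 : MvPolynomial (Fin 3) ℂ) = C 4 := (map_ofNat C 4).symm
  have hd : ∀ k, degreeOf 1 (pderiv k F) ≤ 1 := fun k => (degreeOf_pderiv_le _ _ _).trans hF1
  have hd1 : ∀ k, degreeOf 1 (pderiv 1 (pderiv k F)) ≤ 0 :=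
    fun k => (degreeOf_pderiv_self (hd k)).le
  have hdd : ∀ k l, degreeOf 1 (pderiv k (pderiv l F)) ≤ 1 :=
    fun k l => (degreeOf_pderiv_le _ _ _).trans (hd l)
  have hdd1 : ∀ k, degreeOf 1 (pderiv k (pderiv 1 F)) ≤ 0 := fun k =>
    (degreeOf_pderiv_le _ _ _).trans ((degreeOf_pderiv_self hF1).le)
  rw [GA, GQ]
  refine degOf_add_bound (degOf_add_bound (degOf_add_bound (degOf_add_bound (degOf_add_bound
    ?_ ?_) ?_) ?_) ?_) ?_
  · exact degOf_mul_bound hX0 (hdd 0 0)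
  · exact degOf_mul_bound (degOf_mul_bound (hC 2) hX1)
      (degOf_add_bound (u := 0) (hd1 0) (hdd1 0))
  · have h := degOf_mul_bound (degOf_mul_bound (hC ((N:ℕ):ℂ)) hX2)
      (degOf_add_bound (hdd 2 0) (hdd 0 2))
    exact h.trans (by omega)
  · exact le_trans (degOf_mul_bound (degOf_mul_bound (hC 2) (degOf_mul_bound hX0 hX2))
      (degOf_add_bound (u := 0) (hdd1 2) (hd1 2))) (by omega)
  · exact degOf_mul_bound (degOf_mul_bound (hC 2) hX0) (hd 1)
  · refine (degreeOf_C_mul_le _ _ _).trans ?_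
    have hp1 : degreeOf 1 (pderiv 1 F) ≤ 0 := (degreeOf_pderiv_self hF1).le
    have h1 := degOf_mul_bound (hC ((N : ℕ) : ℂ)) (hd 0)
    have h2 := degOf_mul_bound (degOf_mul_bound (hC 4) hX0) hp1
    have h3 := degreeOf_add_le 1 (C ((N : ℕ) : ℂ) * pderiv 0 F) (C 4 * X 0 * pderiv 1 F)
    omega

lemma deg_G_2 (hF2 : F.degreeOf 2 ≤ 1) (c : ℂ) :
    degreeOf 2 (GA N F + C c * GQ N F) ≤ 1 := by
  have hC : ∀ (z : ℂ), degreeOf 2 (C z : MvPolynomial (Fin 3) ℂ) ≤ 0 := fun z => by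
    simp [degreeOf_C]
  have hX0 : degreeOf 2 (X 0 : MvPolynomial (Fin 3) ℂ) ≤ 0 := by simp [degreeOf_X]
  have hX1 : degreeOf 2 (X 1 : MvPolynomial (Fin 3) ℂ) ≤ 0 := by simp [degreeOf_X]
  have hX2 : degreeOf 2 (X 2 : MvPolynomial (Fin 3) ℂ) ≤ 1 := by simp [degreeOf_X]
  have hd : ∀ k, degreeOf 2 (pderiv k F) ≤ 1 := fun k => (degreeOf_pderiv_le _ _ _).trans hF2
  have hd2 : ∀ k, degreeOf 2 (pderiv 2 (pderiv k F)) ≤ 0 :=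
    fun k => (degreeOf_pderiv_self (hd k)).le
  have hdd : ∀ k l, degreeOf 2 (pderiv k (pderiv l F)) ≤ 1 :=
    fun k l => (degreeOf_pderiv_le _ _ _).trans (hd l)
  have hdd2 : ∀ k, degreeOf 2 (pderiv k (pderiv 2 F)) ≤ 0 := fun k =>
    (degreeOf_pderiv_le _ _ _).trans ((degreeOf_pderiv_self hF2).le)
  rw [GA, GQ]
  refine degOf_add_bound (degOf_add_bound (degOf_add_bound (degOf_add_bound (degOf_add_bound
    ?_ ?_) ?_) ?_) ?_) ?_
  · exact degOf_mul_bound hX0 (hdd 0 0)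
  · have h := degOf_mul_bound (degOf_mul_bound (hC 2) hX1)
      (degOf_add_bound (hdd 1 0) (hdd 0 1))
    exact h.trans (by omega)
  · exact degOf_mul_bound (degOf_mul_bound (hC _) hX2)
      (degOf_add_bound (u := 0) (hd2 0) (hdd2 0))
  · exact degOf_mul_bound (degOf_mul_bound (hC 2) (degOf_mul_bound hX0 hX2))
      (degOf_add_bound (u := 0) (hd2 1) (hdd2 1))
  · exact degOf_mul_bound (degOf_mul_bound (hC 2) hX0) (hd 1)
  · refine (degreeOf_C_mul_le _ _ _).trans ?_
    have hp2 : degreeOf 2 (pderiv 1 F) ≤ 1 := hd 1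
    have h1 := degOf_mul_bound (hC ((N : ℕ) : ℂ)) (hd 0)
    have h2 := degOf_mul_bound (degOf_mul_bound (hC 4) hX0) hp2
    have h3 := degreeOf_add_le 2 (C ((N : ℕ) : ℂ) * pderiv 0 F) (C 4 * X 0 * pderiv 1 F)
    omega

end Deg

set_option maxHeartbeats 1000000 in
set_option synthInstance.maxHeartbeats 400000 in
theorem stmt_4 (N : ℕ) [NeZero N] (hN : 3 ≤ N) (a : ℝ) (n : ℕ) (f : MvP N)
    (hf : S1mem N n f) :
    ∃ g : MvP N, S1mem N n g ∧ phi N g = T1op N a f := by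
  obtain ⟨hfdeg, F, hF1, hF2, hfF⟩ := hf
  have hvS : (![sig N 1, sig N 2, tauTop N] : Fin 3 → MvP N) = vS N := rfl
  rw [hvS] at hfF
  subst hfF
  set c : ℂ := ((2 * a : ℝ) : ℂ) with hc
  have hne : ∀ i : Fin N, i ≠ i + 1 := by
    intro i h
    have h2 : (0 : Fin N) = 1 := add_left_cancel (by rw [add_zero]; exact h)
    have h3 : ((0 : Fin N)).val = ((1 : Fin N)).val := congrArg Fin.val h2
    rw [Fin.val_zero, Fin.val_one' N] at h3
    have h4 : 1 % N = 1 := Nat.mod_eq_of_lt (by omega)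
    omega
  have hXd : ∀ i : Fin N, totalDegree (X i * pderiv i (aeval (vS N) F)) ≤ n := by
    intro i
    by_cases h : pderiv i (aeval (vS N) F) = 0
    · rw [h, mul_zero]
      simp
    · have h1 := totalDegree_pderiv_lt h
      have h2 := totalDegree_mul (X i : MvP N) (pderiv i (aeval (vS N) F))
      have h3 : totalDegree (X i : MvP N) = 1 := totalDegree_X i
      omega
  refine ⟨aeval (vS N) (GA N F + C c * GQ N F),
    ⟨?_, GA N F + C c * GQ N F, deg_G_1 hF1 c, deg_G_2 hF2 c, by rw [hvS]⟩, ?_⟩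
  · -- total degree bound
    have hgid : aeval (vS N) (GA N F + C c * GQ N F)
        = (∑ i : Fin N, X i * pderiv i (pderiv i (aeval (vS N) F)))
          + C c * aeval (vS N) (GQ N F) := by
      rw [map_add, map_mul, aeval_C, MvPolynomial.algebraMap_eq, main_Af hF1 hF2]
    rw [hgid]
    refine (totalDegree_add _ _).trans (max_le ?_ ?_)
    · refine (totalDegree_finset_sum _ _).trans (Finset.sup_le fun i _ => ?_)
      by_cases h2 : pderiv i (pderiv i (aeval (vS N) F)) = 0
      · rw [h2, mul_zero]
        simp
      · have h3 : pderiv i (aeval (vS N) F) ≠ 0 := by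
          intro hz
          rw [hz, map_zero] at h2
          exact h2 rfl
        have t1 := totalDegree_pderiv_lt h2
        have t2 := totalDegree_pderiv_lt h3
        have t3 := totalDegree_mul (X i : MvP N) (pderiv i (pderiv i (aeval (vS N) F)))
        have t4 : totalDegree (X i : MvP N) = 1 := totalDegree_X i
        omega
    · refine (totalDegree_mul _ _).trans ?_
      have hCc : totalDegree (C c : MvP N) = 0 := totalDegree_C c
      have hQ : totalDegree (aeval (vS N) (GQ N F)) ≤ n := by
        rw [← main_Q (F := F)]
        refine (totalDegree_finset_sum _ _).trans (Finset.sup_le fun i _ => ?_)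
        by_cases hq : (aeval (vS N) (pderiv 0 F)
            + C 2 * (X i + X (i + 1)) * aeval (vS N) (pderiv 1 F)) = 0
        · rw [hq]
          simp
        · have h5 := totalDegree_X_sub_mul (hne i) hq
          rw [← main_num] at h5
          have h6 : totalDegree (X i * pderiv i (aeval (vS N) F)
              - X (i + 1) * pderiv (i + 1) (aeval (vS N) F)) ≤ n := by
            rw [sub_eq_add_neg]
            refine (totalDegree_add _ _).trans (max_le (hXd i) ?_)
            rw [totalDegree_neg]
            exact hXd (i + 1)
          omega
      omega
  · -- the operator identity
    have hinj : Function.Injective (phi N) :=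
      IsFractionRing.injective (MvP N) (FractionRing (MvP N))
    have hphi_ne : ∀ i : Fin N, phi N (X i - X (i + 1)) ≠ 0 := by
      intro i h
      have h2 : (X i - X (i + 1) : MvP N) = 0 := hinj (by rw [h, map_zero])
      exact hne i (X_injective (sub_eq_zero.mp h2))
    rw [T1op]
    have e3 : (∑ i : Fin N, phi N (X i + X (i + 1)) * ((phi N (X i - X (i + 1)))⁻¹) ^ 2 *
        phi N (aeval (vS N) F - rename (Equiv.swap i (i + 1)) (aeval (vS N) F))) = 0 := by
      refine Finset.sum_eq_zero fun i _ => ?_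
      rw [sym_f (Equiv.swap i (i + 1)), sub_self, map_zero, mul_zero]
    have e2 : (∑ i : Fin N, (phi N (X i - X (i + 1)))⁻¹ *
        phi N (X i * pderiv i (aeval (vS N) F) - X (i + 1) * pderiv (i + 1) (aeval (vS N) F)))
        = phi N (aeval (vS N) (GQ N F)) := by
      rw [← main_Q (F := F), map_sum]
      refine Finset.sum_congr rfl fun i _ => ?_
      rw [main_num i, map_mul, ← mul_assoc, inv_mul_cancel₀ (hphi_ne i), one_mul]
    have e1 : (∑ i : Fin N, phi N (X i * pderiv i (pderiv i (aeval (vS N) F))))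
        = phi N (aeval (vS N) (GA N F)) := by
      rw [← map_sum, main_Af hF1 hF2]
    rw [e1, e2, e3, mul_zero, sub_zero]
    rw [map_add (aeval (vS N)), map_mul (aeval (vS N)), aeval_C, MvPolynomial.algebraMap_eq,
      map_add (phi N), map_mul (phi N)]

end
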